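/- Let n ≥ 1, T > 0, d ∈ ℝ, and 0 ≤ γ ≤ 1. Let f : (0,T) × ℝⁿ → ℝ be smooth and positive with ∂_τ f = Δf − γ·f·log f on (0,T) × ℝⁿ, and let w : (0,T) → ℝ be smooth. Set v := −log f − w(τ) and P := 2·Δv − |∇v|² + d·n/τ. Then on (0,T) × ℝⁿ: ∂_τ P ≤ ΔP − 2·⟨∇P, ∇v⟩ − (2/τ + 2γ)·P + (n/τ)·((d+2)/τ + 2γ(d+1)) + (n/2)·γ − 2·|∇v|²/τ. -/

import Mathlib

open Set
open scoped RealInnerProductSpace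

noncomputable section

/-- The `i`-th standard basis vector of `ℝⁿ`. -/
def e (n : ℕ) (i : Fin n) : EuclideanSpace ℝ (Fin n) := EuclideanSpace.single i 1

/-- Spatial gradient of a time-dependent function on `ℝⁿ`. -/
def sgrad (n : ℕ) (u : ℝ → EuclideanSpace ℝ (Fin n) → ℝ) (t : ℝ)
    (x : EuclideanSpace ℝ (Fin n)) : EuclideanSpace ℝ (Fin n) :=
  gradient (u t) x

/-- `(i,j)` entry of the spatial Hessian of a time-dependent function on `ℝⁿ`. -/
def shess (n : ℕ) (u : ℝ → EuclideanSpace ℝ (Fin n) → ℝ) (t : ℝ)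
    (x : EuclideanSpace ℝ (Fin n)) (i j : Fin n) : ℝ :=
  fderiv ℝ (fun y => fderiv ℝ (u t) y (e n j)) x (e n i)

/-- Spatial Laplacian (trace of the spatial Hessian). -/
def slap (n : ℕ) (u : ℝ → EuclideanSpace ℝ (Fin n) → ℝ) (t : ℝ)
    (x : EuclideanSpace ℝ (Fin n)) : ℝ :=
  ∑ i, shess n u t x i i

/-- Squared Frobenius norm of the spatial Hessian. -/
def hessSq (n : ℕ) (u : ℝ → EuclideanSpace ℝ (Fin n) → ℝ) (t : ℝ)
    (x : EuclideanSpace ℝ (Fin n)) : ℝ :=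
  ∑ i, ∑ j, (shess n u t x i j) ^ 2

/-- Time derivative of a time-dependent function on `ℝⁿ`. -/
def tderiv (n : ℕ) (u : ℝ → EuclideanSpace ℝ (Fin n) → ℝ) (t : ℝ)
    (x : EuclideanSpace ℝ (Fin n)) : ℝ :=
  deriv (fun s => u s x) t

namespace Cor35

variable {D F : Type*} [NormedAddCommGroup D] [NormedSpace ℝ D]
  [NormedAddCommGroup F] [NormedSpace ℝ F]

/-- Directional derivative. -/
def pd (m : D) (g : D → ℝ) : D → ℝ := fun p => fderiv ℝ g p m

theorem hasFDerivAt_of_cdOn {Ω : Set D} (hΩ : IsOpen Ω) {g : D → F}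
    (hg : ContDiffOn ℝ (⊤ : ℕ∞) g Ω) {p : D} (hp : p ∈ Ω) :
    HasFDerivAt g (fderiv ℝ g p) p :=
  ((hg.contDiffAt (hΩ.mem_nhds hp)).differentiableAt (by simp)).hasFDerivAt

theorem diffAt_of_cdOn {Ω : Set D} (hΩ : IsOpen Ω) {g : D → F}
    (hg : ContDiffOn ℝ (⊤ : ℕ∞) g Ω) {p : D} (hp : p ∈ Ω) :
    DifferentiableAt ℝ g p :=
  (hasFDerivAt_of_cdOn hΩ hg hp).differentiableAt

theorem pd_contDiffOn {Ω : Set D} (hΩ : IsOpen Ω) {g : D → ℝ}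
    (hg : ContDiffOn ℝ (⊤ : ℕ∞) g Ω) (m : D) :
    ContDiffOn ℝ (⊤ : ℕ∞) (pd m g) Ω := by
  have h : ContDiffOn ℝ (⊤ : ℕ∞) (fderiv ℝ g) Ω := hg.fderiv_of_isOpen hΩ (by exact_mod_cast le_top)
  exact (ContinuousLinearMap.apply ℝ ℝ m).contDiff.comp_contDiffOn h

theorem pd_eq {g : D → ℝ} {G : D →L[ℝ] ℝ} {p : D} (h : HasFDerivAt g G p) (m : D) :
    pd m g p = G m := by rw [pd, h.fderiv]

theorem pd_congr {g₁ g₂ : D → ℝ} {p : D} (h : g₁ =ᶠ[nhds p] g₂) (m : D) :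
    pd m g₁ p = pd m g₂ p := by simp only [pd, h.fderiv_eq]

theorem pd_symm {Ω : Set D} (hΩ : IsOpen Ω) {g : D → ℝ}
    (hg : ContDiffOn ℝ (⊤ : ℕ∞) g Ω) {p : D} (hp : p ∈ Ω) (m m' : D) :
    pd m (pd m' g) p = pd m' (pd m g) p := by
  have hf' : ContDiffOn ℝ (⊤ : ℕ∞) (fderiv ℝ g) Ω :=
    hg.fderiv_of_isOpen hΩ (by exact_mod_cast le_top)
  have hd : HasFDerivAt (fderiv ℝ g) (fderiv ℝ (fderiv ℝ g) p) p :=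
    hasFDerivAt_of_cdOn hΩ hf' hp
  have hev : ∀ᶠ y in nhds p, HasFDerivAt g (fderiv ℝ g y) y := by
    filter_upwards [hΩ.mem_nhds hp] with y hy using hasFDerivAt_of_cdOn hΩ hg hy
  have hsym := second_derivative_symmetric_of_eventually hev hd
  have h1 : ∀ k : D, HasFDerivAt (fun y => fderiv ℝ g y k)
      ((ContinuousLinearMap.apply ℝ ℝ k).comp (fderiv ℝ (fderiv ℝ g) p)) p :=
    fun k => (ContinuousLinearMap.apply ℝ ℝ k).hasFDerivAt.comp p hd
  have e1 : pd m (pd m' g) p = fderiv ℝ (fderiv ℝ g) p m m' := pd_eq (h1 m') m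
  have e2 : pd m' (pd m g) p = fderiv ℝ (fderiv ℝ g) p m' m := pd_eq (h1 m) m'
  rw [e1, e2, hsym m m']

theorem pd_sum {Ω : Set D} (hΩ : IsOpen Ω) {ι : Type*} (s : Finset ι) {g : ι → D → ℝ}
    (hg : ∀ i ∈ s, ContDiffOn ℝ (⊤ : ℕ∞) (g i) Ω) {p : D} (hp : p ∈ Ω) (m : D) :
    pd m (fun q => ∑ i ∈ s, g i q) p = ∑ i ∈ s, pd m (g i) p := by
  have h : HasFDerivAt (fun q => ∑ i ∈ s, g i q) (∑ i ∈ s, fderiv ℝ (g i) p) p :=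
    HasFDerivAt.fun_sum fun i hi => hasFDerivAt_of_cdOn hΩ (hg i hi) hp
  rw [pd_eq h m]
  simp [pd]

theorem pd_mul {Ω : Set D} (hΩ : IsOpen Ω) {g₁ g₂ : D → ℝ}
    (h₁ : ContDiffOn ℝ (⊤ : ℕ∞) g₁ Ω) (h₂ : ContDiffOn ℝ (⊤ : ℕ∞) g₂ Ω)
    {p : D} (hp : p ∈ Ω) (m : D) :
    pd m (fun q => g₁ q * g₂ q) p = pd m g₁ p * g₂ p + g₁ p * pd m g₂ p := by
  have h : HasFDerivAt (fun q => g₁ q * g₂ q)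
      (g₁ p • fderiv ℝ g₂ p + g₂ p • fderiv ℝ g₁ p) p :=
    (hasFDerivAt_of_cdOn hΩ h₁ hp).mul (hasFDerivAt_of_cdOn hΩ h₂ hp)
  rw [pd_eq h m]
  simp [pd]
  ring

theorem pd_sq {Ω : Set D} (hΩ : IsOpen Ω) {g : D → ℝ}
    (hg : ContDiffOn ℝ (⊤ : ℕ∞) g Ω) {p : D} (hp : p ∈ Ω) (m : D) :
    pd m (fun q => (g q) ^ 2 : D → ℝ) p = 2 * g p * pd m g p := by
  have := pd_mul hΩ hg hg hp m
  have e : (fun q => g q * g q) = fun q => (g q) ^ 2 := by funext q; ring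
  rw [e] at this
  rw [this]; ring

theorem pd_const_mul {g : D → ℝ} {p : D} (h : DifferentiableAt ℝ g p) (a : ℝ) (m : D) :
    pd m (fun q => a * g q) p = a * pd m g p := by
  rw [pd, fderiv_const_mul h a]; simp [pd]

theorem pd_sub {g₁ g₂ : D → ℝ} {p : D} (h₁ : DifferentiableAt ℝ g₁ p)
    (h₂ : DifferentiableAt ℝ g₂ p) (m : D) :
    pd m (fun q => g₁ q - g₂ q) p = pd m g₁ p - pd m g₂ p := by
  rw [pd, fderiv_fun_sub h₁ h₂]; simp [pd]

theorem pd_add {g₁ g₂ : D → ℝ} {p : D} (h₁ : DifferentiableAt ℝ g₁ p)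
    (h₂ : DifferentiableAt ℝ g₂ p) (m : D) :
    pd m (fun q => g₁ q + g₂ q) p = pd m g₁ p + pd m g₂ p := by
  rw [pd, fderiv_fun_add h₁ h₂]; simp [pd]


section trans
variable {n : ℕ} {T : ℝ}

/-- The parabolic domain. -/
def Om (n : ℕ) (T : ℝ) : Set (ℝ × EuclideanSpace ℝ (Fin n)) :=
  Ioo (0:ℝ) T ×ˢ (univ : Set (EuclideanSpace ℝ (Fin n)))

theorem hOm : IsOpen (Om n T) := isOpen_Ioo.prod isOpen_univ

/-- Time direction. -/
def TD (n : ℕ) : ℝ × EuclideanSpace ℝ (Fin n) := ((1:ℝ), 0)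

/-- Spatial directions. -/
def ED (n : ℕ) (i : Fin n) : ℝ × EuclideanSpace ℝ (Fin n) := ((0:ℝ), e n i)

theorem spatial_pd {g : ℝ × EuclideanSpace ℝ (Fin n) → ℝ}
    (hg : ContDiffOn ℝ (⊤ : ℕ∞) g (Om n T))
    {τ : ℝ} (hτ : τ ∈ Ioo (0:ℝ) T) (x : EuclideanSpace ℝ (Fin n))
    (h : EuclideanSpace ℝ (Fin n)) :
    fderiv ℝ (fun y => g (τ, y)) x h = pd ((0:ℝ), h) g (τ, x) := by
  have hp : ((τ, x) : ℝ × EuclideanSpace ℝ (Fin n)) ∈ Om n T := ⟨hτ, mem_univ x⟩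
  have hd := hasFDerivAt_of_cdOn hOm hg hp
  have h2 : HasFDerivAt (fun y : EuclideanSpace ℝ (Fin n) => ((τ, y) : ℝ × _))
      ((0 : EuclideanSpace ℝ (Fin n) →L[ℝ] ℝ).prod (ContinuousLinearMap.id ℝ _)) x :=
    HasFDerivAt.prodMk (hasFDerivAt_const τ x) (hasFDerivAt_id x)
  have key : HasFDerivAt (fun y => g (τ, y))
      ((fderiv ℝ g (τ, x)).comp
        ((0 : EuclideanSpace ℝ (Fin n) →L[ℝ] ℝ).prod (ContinuousLinearMap.id ℝ _))) x :=
    hd.comp x h2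
  rw [key.fderiv]
  rfl

theorem time_pd {g : ℝ × EuclideanSpace ℝ (Fin n) → ℝ}
    (hg : ContDiffOn ℝ (⊤ : ℕ∞) g (Om n T))
    {τ : ℝ} (hτ : τ ∈ Ioo (0:ℝ) T) (x : EuclideanSpace ℝ (Fin n)) :
    deriv (fun s => g (s, x)) τ = pd (TD n) g (τ, x) := by
  have hp : ((τ, x) : ℝ × EuclideanSpace ℝ (Fin n)) ∈ Om n T := ⟨hτ, mem_univ x⟩
  have hd := hasFDerivAt_of_cdOn hOm hg hp
  have h2 : HasDerivAt (fun s : ℝ => ((s, x) : ℝ × EuclideanSpace ℝ (Fin n)))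
      ((1:ℝ), (0 : EuclideanSpace ℝ (Fin n))) τ :=
    HasDerivAt.prodMk (hasDerivAt_id τ) (hasDerivAt_const τ x)
  have key : HasDerivAt (fun s => g (s, x)) (fderiv ℝ g (τ, x) ((1:ℝ), 0)) τ :=
    hd.comp_hasDerivAt τ h2
  exact key.deriv

theorem tderiv_eq {u : ℝ → EuclideanSpace ℝ (Fin n) → ℝ}
    {g : ℝ × EuclideanSpace ℝ (Fin n) → ℝ} (hg : ContDiffOn ℝ (⊤ : ℕ∞) g (Om n T))
    (hu : ∀ s ∈ Ioo (0:ℝ) T, ∀ y, u s y = g (s, y))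
    {τ : ℝ} (hτ : τ ∈ Ioo (0:ℝ) T) (x : EuclideanSpace ℝ (Fin n)) :
    tderiv n u τ x = pd (TD n) g (τ, x) := by
  have hev : (fun s => u s x) =ᶠ[nhds τ] fun s => g (s, x) := by
    filter_upwards [isOpen_Ioo.mem_nhds hτ] with s hs using hu s hs x
  rw [tderiv, hev.deriv_eq, time_pd hg hτ x]

theorem fcomp_eq {u : ℝ → EuclideanSpace ℝ (Fin n) → ℝ}
    {g : ℝ × EuclideanSpace ℝ (Fin n) → ℝ} (hg : ContDiffOn ℝ (⊤ : ℕ∞) g (Om n T))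
    (hu : ∀ s ∈ Ioo (0:ℝ) T, ∀ y, u s y = g (s, y))
    {τ : ℝ} (hτ : τ ∈ Ioo (0:ℝ) T) (x : EuclideanSpace ℝ (Fin n))
    (h : EuclideanSpace ℝ (Fin n)) :
    fderiv ℝ (u τ) x h = pd ((0:ℝ), h) g (τ, x) := by
  have h1 : u τ = fun y => g (τ, y) := funext (hu τ hτ)
  rw [h1, spatial_pd hg hτ]

theorem shess_eq {u : ℝ → EuclideanSpace ℝ (Fin n) → ℝ}
    {g : ℝ × EuclideanSpace ℝ (Fin n) → ℝ} (hg : ContDiffOn ℝ (⊤ : ℕ∞) g (Om n T))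
    (hu : ∀ s ∈ Ioo (0:ℝ) T, ∀ y, u s y = g (s, y))
    {τ : ℝ} (hτ : τ ∈ Ioo (0:ℝ) T) (x : EuclideanSpace ℝ (Fin n)) (i j : Fin n) :
    shess n u τ x i j = pd (ED n i) (pd (ED n j) g) (τ, x) := by
  rw [shess]
  have h1 : (fun y => fderiv ℝ (u τ) y (e n j)) = fun y => pd (ED n j) g (τ, y) := by
    funext y
    have := fcomp_eq hg hu hτ y (e n j)
    rw [this]; rfl
  rw [h1]
  have h2 := spatial_pd (pd_contDiffOn hOm hg (ED n j)) hτ x (e n i)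
  rw [h2]; rfl

theorem slap_eq {u : ℝ → EuclideanSpace ℝ (Fin n) → ℝ}
    {g : ℝ × EuclideanSpace ℝ (Fin n) → ℝ} (hg : ContDiffOn ℝ (⊤ : ℕ∞) g (Om n T))
    (hu : ∀ s ∈ Ioo (0:ℝ) T, ∀ y, u s y = g (s, y))
    {τ : ℝ} (hτ : τ ∈ Ioo (0:ℝ) T) (x : EuclideanSpace ℝ (Fin n)) :
    slap n u τ x = ∑ i, pd (ED n i) (pd (ED n i) g) (τ, x) := by
  rw [slap]
  exact Finset.sum_congr rfl fun i _ => shess_eq hg hu hτ x i i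

theorem grad_comp_eq {u : ℝ → EuclideanSpace ℝ (Fin n) → ℝ}
    {g : ℝ × EuclideanSpace ℝ (Fin n) → ℝ} (hg : ContDiffOn ℝ (⊤ : ℕ∞) g (Om n T))
    (hu : ∀ s ∈ Ioo (0:ℝ) T, ∀ y, u s y = g (s, y))
    {τ : ℝ} (hτ : τ ∈ Ioo (0:ℝ) T) (x : EuclideanSpace ℝ (Fin n)) (i : Fin n) :
    sgrad n u τ x i = pd (ED n i) g (τ, x) := by
  have h1 : ⟪sgrad n u τ x, e n i⟫ = fderiv ℝ (u τ) x (e n i) :=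
    InnerProductSpace.toDual_symm_apply
  have h2 : ⟪sgrad n u τ x, e n i⟫ = sgrad n u τ x i := by
    rw [e, real_inner_comm]
    simp [EuclideanSpace.inner_single_left]
  rw [← h2, h1, fcomp_eq hg hu hτ x (e n i)]; rfl

theorem inner_grads_eq {u₁ u₂ : ℝ → EuclideanSpace ℝ (Fin n) → ℝ}
    {g₁ g₂ : ℝ × EuclideanSpace ℝ (Fin n) → ℝ}
    (hg₁ : ContDiffOn ℝ (⊤ : ℕ∞) g₁ (Om n T)) (hg₂ : ContDiffOn ℝ (⊤ : ℕ∞) g₂ (Om n T))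
    (hu₁ : ∀ s ∈ Ioo (0:ℝ) T, ∀ y, u₁ s y = g₁ (s, y))
    (hu₂ : ∀ s ∈ Ioo (0:ℝ) T, ∀ y, u₂ s y = g₂ (s, y))
    {τ : ℝ} (hτ : τ ∈ Ioo (0:ℝ) T) (x : EuclideanSpace ℝ (Fin n)) :
    ⟪sgrad n u₁ τ x, sgrad n u₂ τ x⟫
      = ∑ i, pd (ED n i) g₁ (τ, x) * pd (ED n i) g₂ (τ, x) := by
  rw [PiLp.inner_apply]
  refine Finset.sum_congr rfl fun i _ => ?_
  rw [grad_comp_eq hg₁ hu₁ hτ x i, grad_comp_eq hg₂ hu₂ hτ x i]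
  simp
  ring

theorem norm_grad_eq {u : ℝ → EuclideanSpace ℝ (Fin n) → ℝ}
    {g : ℝ × EuclideanSpace ℝ (Fin n) → ℝ} (hg : ContDiffOn ℝ (⊤ : ℕ∞) g (Om n T))
    (hu : ∀ s ∈ Ioo (0:ℝ) T, ∀ y, u s y = g (s, y))
    {τ : ℝ} (hτ : τ ∈ Ioo (0:ℝ) T) (x : EuclideanSpace ℝ (Fin n)) :
    ‖sgrad n u τ x‖ ^ 2 = ∑ i, (pd (ED n i) g (τ, x)) ^ 2 := by
  rw [← real_inner_self_eq_norm_sq, inner_grads_eq hg hg hu hu hτ x]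
  refine Finset.sum_congr rfl fun i _ => ?_
  ring

end trans

section main
variable {n : ℕ} {T : ℝ}

/-- First spatial derivatives. -/
def AA (n : ℕ) (X : ℝ × EuclideanSpace ℝ (Fin n) → ℝ) (i : Fin n) :
    ℝ × EuclideanSpace ℝ (Fin n) → ℝ := pd (ED n i) X

/-- Second spatial derivatives. -/
def BB (n : ℕ) (X : ℝ × EuclideanSpace ℝ (Fin n) → ℝ) (i j : Fin n) :
    ℝ × EuclideanSpace ℝ (Fin n) → ℝ := pd (ED n i) (AA n X j)

/-- Squared norm of spatial gradient. -/
def QQ (n : ℕ) (X : ℝ × EuclideanSpace ℝ (Fin n) → ℝ) :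
    ℝ × EuclideanSpace ℝ (Fin n) → ℝ := fun q => ∑ i, (AA n X i q) ^ 2

/-- Spatial Laplacian. -/
def LL (n : ℕ) (X : ℝ × EuclideanSpace ℝ (Fin n) → ℝ) :
    ℝ × EuclideanSpace ℝ (Fin n) → ℝ := fun q => ∑ i, BB n X i i q

/-- The Harnack quantity. -/
def PP (n : ℕ) (d : ℝ) (X : ℝ × EuclideanSpace ℝ (Fin n) → ℝ) :
    ℝ × EuclideanSpace ℝ (Fin n) → ℝ :=
  fun q => 2 * LL n X q - QQ n X q + d * n / q.1

section smooth
variable {X : ℝ × EuclideanSpace ℝ (Fin n) → ℝ} (hX : ContDiffOn ℝ (⊤ : ℕ∞) X (Om n T))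
include hX

theorem AA_cd (i : Fin n) : ContDiffOn ℝ (⊤ : ℕ∞) (AA n X i) (Om n T) :=
  pd_contDiffOn hOm hX _

theorem BB_cd (i j : Fin n) : ContDiffOn ℝ (⊤ : ℕ∞) (BB n X i j) (Om n T) :=
  pd_contDiffOn hOm (AA_cd hX j) _

theorem QQ_cd : ContDiffOn ℝ (⊤ : ℕ∞) (QQ n X) (Om n T) :=
  ContDiffOn.sum fun i _ => (AA_cd hX i).pow 2

theorem LL_cd : ContDiffOn ℝ (⊤ : ℕ∞) (LL n X) (Om n T) :=
  ContDiffOn.sum fun i _ => BB_cd hX i i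

theorem PP_cd (d : ℝ) : ContDiffOn ℝ (⊤ : ℕ∞) (PP n d X) (Om n T) := by
  have hR : ContDiffOn ℝ (⊤ : ℕ∞) (fun q : ℝ × EuclideanSpace ℝ (Fin n) => d * n / q.1)
      (Om n T) := by
    apply ContDiffOn.div contDiffOn_const (contDiff_fst.contDiffOn)
    exact fun q hq => ne_of_gt hq.1.1
  exact ((contDiffOn_const.mul (LL_cd hX)).sub (QQ_cd hX)).add hR

end smooth

set_option maxHeartbeats 1000000 in
theorem core (n : ℕ) (hn : 1 ≤ n) {T : ℝ} (d γ : ℝ) (hγ0 : 0 ≤ γ) (hγ1 : γ ≤ 1)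
    (X : ℝ × EuclideanSpace ℝ (Fin n) → ℝ) (c : ℝ → ℝ)
    (hX : ContDiffOn ℝ (⊤ : ℕ∞) X (Om n T)) (hc : ContDiffOn ℝ (⊤ : ℕ∞) c (Ioo 0 T))
    (veq : ∀ q ∈ Om n T, pd (TD n) X q = LL n X q - QQ n X q - γ * X q - c q.1)
    {τ : ℝ} (hτ : τ ∈ Ioo (0:ℝ) T) (x : EuclideanSpace ℝ (Fin n)) :
    pd (TD n) (PP n d X) (τ, x)
      ≤ (∑ i, pd (ED n i) (pd (ED n i) (PP n d X)) (τ, x))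
        - 2 * (∑ i, pd (ED n i) (PP n d X) (τ, x) * AA n X i (τ, x))
        - (2 / τ + 2 * γ) * PP n d X (τ, x)
        + (n / τ) * ((d + 2) / τ + 2 * γ * (d + 1))
        + (n / 2) * γ
        - 2 * QQ n X (τ, x) / τ := by
  have hΩ : IsOpen (Om n T) := hOm
  have hp : ((τ, x) : ℝ × EuclideanSpace ℝ (Fin n)) ∈ Om n T := ⟨hτ, mem_univ x⟩
  have hτ0 : 0 < τ := hτ.1
  have hτne : τ ≠ 0 := ne_of_gt hτ0
  have hA : ∀ i, ContDiffOn ℝ (⊤ : ℕ∞) (AA n X i) (Om n T) := fun i => AA_cd hX i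
  have hB : ∀ i j, ContDiffOn ℝ (⊤ : ℕ∞) (BB n X i j) (Om n T) := fun i j => BB_cd hX i j
  have hQc : ContDiffOn ℝ (⊤ : ℕ∞) (QQ n X) (Om n T) := QQ_cd hX
  have hLc : ContDiffOn ℝ (⊤ : ℕ∞) (LL n X) (Om n T) := LL_cd hX
  -- derivative of the 1/τ term
  have hRhas : ∀ q : ℝ × EuclideanSpace ℝ (Fin n), q.1 ≠ 0 →
      HasFDerivAt (fun q' : ℝ × EuclideanSpace ℝ (Fin n) => d * (n:ℝ) / q'.1)
        ((d * (n:ℝ) * -((q.1 ^ 2)⁻¹)) • ContinuousLinearMap.fst ℝ ℝ (EuclideanSpace ℝ (Fin n)))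
        q := by
    intro q hq
    have h1 : HasDerivAt (fun s : ℝ => d * (n:ℝ) / s) (d * (n:ℝ) * -((q.1 ^ 2)⁻¹)) q.1 := by
      simpa [div_eq_mul_inv] using (hasDerivAt_inv hq).const_mul (d * (n:ℝ))
    exact (h1.comp_hasFDerivAt q (hasFDerivAt_fst (𝕜 := ℝ) (p := q))).congr_fderiv
      (by ext <;> simp <;> ring)
  -- pd of PP in any direction
  have pdPP : ∀ q ∈ Om n T, ∀ m : ℝ × EuclideanSpace ℝ (Fin n),
      pd m (PP n d X) q
        = 2 * pd m (LL n X) q - pd m (QQ n X) q + (d * n * -((q.1 ^ 2)⁻¹)) * m.1 := by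
    intro q hq m
    have hhas : HasFDerivAt (PP n d X)
        ((2:ℝ) • fderiv ℝ (LL n X) q - fderiv ℝ (QQ n X) q
          + (d * (n:ℝ) * -((q.1 ^ 2)⁻¹)) • ContinuousLinearMap.fst ℝ ℝ _) q := by
      have h1 := ((hasFDerivAt_of_cdOn hΩ hLc hq).const_mul (2:ℝ)).sub
        (hasFDerivAt_of_cdOn hΩ hQc hq)
      exact h1.add (hRhas q (ne_of_gt hq.1.1))
    rw [pd_eq hhas m]
    simp [pd]
  have pdPPs : ∀ q ∈ Om n T, ∀ i, pd (ED n i) (PP n d X) q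
      = 2 * pd (ED n i) (LL n X) q - pd (ED n i) (QQ n X) q := by
    intro q hq i
    rw [pdPP q hq (ED n i)]
    simp [ED]
  -- first spatial derivative of QQ
  have step1 : ∀ q ∈ Om n T, ∀ i, pd (ED n i) (QQ n X) q
      = 2 * ∑ j, AA n X j q * BB n X i j q := by
    intro q hq i
    have h1 : pd (ED n i) (QQ n X) q = ∑ j, pd (ED n i) (fun q' => (AA n X j q') ^ 2) q :=
      pd_sum hΩ Finset.univ (fun j _ => (hA j).pow 2) hq (ED n i)
    rw [h1, Finset.mul_sum]
    refine Finset.sum_congr rfl fun j _ => ?_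
    rw [pd_sq hΩ (hA j) hq]
    show 2 * AA n X j q * BB n X i j q = _
    ring
  -- derivative of c ∘ fst
  have hcfst : ∀ q : ℝ × EuclideanSpace ℝ (Fin n), q.1 ∈ Ioo (0:ℝ) T →
      HasFDerivAt (fun q' : ℝ × EuclideanSpace ℝ (Fin n) => c q'.1)
        (deriv c q.1 • ContinuousLinearMap.fst ℝ ℝ (EuclideanSpace ℝ (Fin n))) q := by
    intro q hq1
    have hcd : HasDerivAt c (deriv c q.1) q.1 :=
      ((hc.contDiffAt (isOpen_Ioo.mem_nhds hq1)).differentiableAt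
        (by simp)).hasDerivAt
    simpa [Function.comp_def] using hcd.comp_hasFDerivAt q (hasFDerivAt_fst (𝕜 := ℝ) (p := q))
  -- spatial derivative of the time derivative, via the PDE
  have step4 : ∀ q ∈ Om n T, ∀ i, pd (ED n i) (pd (TD n) X) q
      = pd (ED n i) (LL n X) q - pd (ED n i) (QQ n X) q - γ * AA n X i q := by
    intro q hq i
    have hev : pd (TD n) X =ᶠ[nhds q] fun q' => LL n X q' - QQ n X q' - γ * X q' - c q'.1 := by
      filter_upwards [hΩ.mem_nhds hq] with y hy using veq y hy
    rw [pd_congr hev]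
    have hhas : HasFDerivAt (fun q' => LL n X q' - QQ n X q' - γ * X q' - c q'.1)
        (fderiv ℝ (LL n X) q - fderiv ℝ (QQ n X) q - γ • fderiv ℝ X q
          - deriv c q.1 • ContinuousLinearMap.fst ℝ ℝ _) q :=
      (((hasFDerivAt_of_cdOn hΩ hLc hq).sub (hasFDerivAt_of_cdOn hΩ hQc hq)).sub
        ((hasFDerivAt_of_cdOn hΩ hX hq).const_mul γ)).sub (hcfst q hq.1)
    rw [pd_eq hhas (ED n i)]
    show _ = pd (ED n i) (LL n X) q - pd (ED n i) (QQ n X) q - γ * pd (ED n i) X q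
    simp [pd, ED]
  -- second spatial derivatives of QQ (Bochner, part 1)
  have h5 : ∀ i, pd (ED n i) (pd (ED n i) (QQ n X)) (τ, x)
      = 2 * ∑ j, (BB n X i j (τ, x) * BB n X i j (τ, x)
          + AA n X j (τ, x) * pd (ED n i) (BB n X i j) (τ, x)) := by
    intro i
    have hev : pd (ED n i) (QQ n X) =ᶠ[nhds ((τ, x) : ℝ × EuclideanSpace ℝ (Fin n))]
        fun q => 2 * ∑ j, AA n X j q * BB n X i j q := by
      filter_upwards [hΩ.mem_nhds hp] with y hy using step1 y hy i
    rw [pd_congr hev]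
    have hds : DifferentiableAt ℝ
        (fun q : ℝ × EuclideanSpace ℝ (Fin n) => ∑ j, AA n X j q * BB n X i j q) (τ, x) :=
      diffAt_of_cdOn hΩ (ContDiffOn.sum fun j _ => (hA j).mul (hB i j)) hp
    rw [pd_const_mul hds 2,
      pd_sum hΩ Finset.univ (fun j _ => (hA j).mul (hB i j)) hp (ED n i)]
    congr 1
    refine Finset.sum_congr rfl fun j _ => ?_
    rw [pd_mul hΩ (hA j) (hB i j) hp (ED n i)]
    show BB n X i j (τ, x) * BB n X i j (τ, x) + _ = _
    ring
  -- commuting third derivatives (Bochner, part 2)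
  have h6 : ∀ j, ∑ i, pd (ED n i) (BB n X i j) (τ, x) = pd (ED n j) (LL n X) (τ, x) := by
    intro j
    have e1 : ∀ i, pd (ED n i) (BB n X i j) (τ, x) = pd (ED n j) (BB n X i i) (τ, x) := by
      intro i
      have hev : BB n X i j =ᶠ[nhds ((τ, x) : ℝ × EuclideanSpace ℝ (Fin n))]
          pd (ED n j) (AA n X i) := by
        filter_upwards [hΩ.mem_nhds hp] with y hy
        exact pd_symm hΩ hX hy (ED n i) (ED n j)
      rw [pd_congr hev (ED n i), pd_symm hΩ (hA i) hp (ED n i) (ED n j)]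
      rfl
    rw [Finset.sum_congr rfl fun i _ => e1 i]
    exact (pd_sum hΩ Finset.univ (fun i _ => hB i i) hp (ED n j)).symm
  -- Bochner formula
  have h7 : ∑ i, pd (ED n i) (pd (ED n i) (QQ n X)) (τ, x)
      = 2 * (∑ i, ∑ j, BB n X i j (τ, x) ^ 2)
        + 2 * ∑ j, AA n X j (τ, x) * pd (ED n j) (LL n X) (τ, x) := by
    rw [Finset.sum_congr rfl fun i _ => h5 i]
    calc ∑ i, 2 * ∑ j, (BB n X i j (τ, x) * BB n X i j (τ, x)
            + AA n X j (τ, x) * pd (ED n i) (BB n X i j) (τ, x))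
        = ∑ i, ((∑ j, 2 * BB n X i j (τ, x) ^ 2)
            + ∑ j, 2 * (AA n X j (τ, x) * pd (ED n i) (BB n X i j) (τ, x))) := by
          refine Finset.sum_congr rfl fun i _ => ?_
          rw [Finset.mul_sum, ← Finset.sum_add_distrib]
          refine Finset.sum_congr rfl fun j _ => by ring
      _ = (∑ i, ∑ j, 2 * BB n X i j (τ, x) ^ 2)
            + ∑ i, ∑ j, 2 * (AA n X j (τ, x) * pd (ED n i) (BB n X i j) (τ, x)) :=
          Finset.sum_add_distrib
      _ = 2 * (∑ i, ∑ j, BB n X i j (τ, x) ^ 2)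
            + 2 * ∑ j, AA n X j (τ, x) * pd (ED n j) (LL n X) (τ, x) := by
          congr 1
          · rw [Finset.mul_sum]
            exact Finset.sum_congr rfl fun i _ => by rw [Finset.mul_sum]
          · rw [Finset.sum_comm, Finset.mul_sum]
            refine Finset.sum_congr rfl fun j _ => ?_
            rw [← h6 j, Finset.mul_sum, Finset.mul_sum]
  -- commuting time and space derivatives
  have h8a : ∀ q ∈ Om n T, ∀ i, pd (TD n) (AA n X i) q = pd (ED n i) (pd (TD n) X) q :=
    fun q hq i => pd_symm hΩ hX hq (TD n) (ED n i)
  have h8b : ∀ i, pd (TD n) (BB n X i i) (τ, x)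
      = pd (ED n i) (pd (ED n i) (pd (TD n) X)) (τ, x) := by
    intro i
    have e1 : pd (TD n) (BB n X i i) (τ, x) = pd (ED n i) (pd (TD n) (AA n X i)) (τ, x) :=
      pd_symm hΩ (hA i) hp (TD n) (ED n i)
    rw [e1]
    have hev : pd (TD n) (AA n X i) =ᶠ[nhds ((τ, x) : ℝ × EuclideanSpace ℝ (Fin n))]
        pd (ED n i) (pd (TD n) X) := by
      filter_upwards [hΩ.mem_nhds hp] with y hy using h8a y hy i
    exact pd_congr hev (ED n i)
  have h8c : ∀ i, pd (ED n i) (pd (ED n i) (pd (TD n) X)) (τ, x)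
      = pd (ED n i) (pd (ED n i) (LL n X)) (τ, x)
        - pd (ED n i) (pd (ED n i) (QQ n X)) (τ, x) - γ * BB n X i i (τ, x) := by
    intro i
    have hev : pd (ED n i) (pd (TD n) X) =ᶠ[nhds ((τ, x) : ℝ × EuclideanSpace ℝ (Fin n))]
        fun q => pd (ED n i) (LL n X) q - pd (ED n i) (QQ n X) q - γ * AA n X i q := by
      filter_upwards [hΩ.mem_nhds hp] with y hy using step4 y hy i
    rw [pd_congr hev]
    have hhas : HasFDerivAt
        (fun q => pd (ED n i) (LL n X) q - pd (ED n i) (QQ n X) q - γ * AA n X i q)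
        (fderiv ℝ (pd (ED n i) (LL n X)) (τ, x) - fderiv ℝ (pd (ED n i) (QQ n X)) (τ, x)
          - γ • fderiv ℝ (AA n X i) (τ, x)) (τ, x) :=
      ((hasFDerivAt_of_cdOn hΩ (pd_contDiffOn hΩ hLc (ED n i)) hp).sub
        (hasFDerivAt_of_cdOn hΩ (pd_contDiffOn hΩ hQc (ED n i)) hp)).sub
        ((hasFDerivAt_of_cdOn hΩ (hA i) hp).const_mul γ)
    rw [pd_eq hhas (ED n i)]
    simp [pd, BB]
  have h8d : pd (TD n) (LL n X) (τ, x)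
      = (∑ i, pd (ED n i) (pd (ED n i) (LL n X)) (τ, x))
        - (∑ i, pd (ED n i) (pd (ED n i) (QQ n X)) (τ, x)) - γ * LL n X (τ, x) := by
    have e1 : pd (TD n) (LL n X) (τ, x) = ∑ i, pd (TD n) (BB n X i i) (τ, x) :=
      pd_sum hΩ Finset.univ (fun i _ => hB i i) hp (TD n)
    rw [e1, Finset.sum_congr rfl fun i _ => (h8b i).trans (h8c i),
      Finset.sum_sub_distrib, Finset.sum_sub_distrib, ← Finset.mul_sum]
    rfl
  have h8e : pd (TD n) (QQ n X) (τ, x)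
      = 2 * (∑ i, AA n X i (τ, x) * pd (ED n i) (LL n X) (τ, x))
        - 2 * (∑ i, AA n X i (τ, x) * pd (ED n i) (QQ n X) (τ, x))
        - 2 * γ * QQ n X (τ, x) := by
    have e1 : pd (TD n) (QQ n X) (τ, x) = ∑ i, pd (TD n) (fun q => (AA n X i q) ^ 2) (τ, x) :=
      pd_sum hΩ Finset.univ (fun i _ => (hA i).pow 2) hp (TD n)
    have e2 : ∀ i, pd (TD n) (fun q => (AA n X i q) ^ 2) (τ, x)
        = 2 * (AA n X i (τ, x) * pd (ED n i) (LL n X) (τ, x))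
          - 2 * (AA n X i (τ, x) * pd (ED n i) (QQ n X) (τ, x))
          - 2 * γ * (AA n X i (τ, x)) ^ 2 := by
      intro i
      rw [pd_sq hΩ (hA i) hp (TD n), h8a (τ, x) hp i, step4 (τ, x) hp i]
      ring
    rw [e1, Finset.sum_congr rfl fun i _ => e2 i, Finset.sum_sub_distrib,
      Finset.sum_sub_distrib, ← Finset.mul_sum, ← Finset.mul_sum, ← Finset.mul_sum]
    rfl
  have h8f : pd (TD n) (PP n d X) (τ, x)
      = 2 * pd (TD n) (LL n X) (τ, x) - pd (TD n) (QQ n X) (τ, x)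
        + d * n * -((τ ^ 2)⁻¹) := by
    rw [pdPP (τ, x) hp (TD n)]
    simp [TD]
  -- second spatial derivatives of PP
  have h9 : ∀ i, pd (ED n i) (pd (ED n i) (PP n d X)) (τ, x)
      = 2 * pd (ED n i) (pd (ED n i) (LL n X)) (τ, x)
        - pd (ED n i) (pd (ED n i) (QQ n X)) (τ, x) := by
    intro i
    have hev : pd (ED n i) (PP n d X) =ᶠ[nhds ((τ, x) : ℝ × EuclideanSpace ℝ (Fin n))]
        fun q => 2 * pd (ED n i) (LL n X) q - pd (ED n i) (QQ n X) q := by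
      filter_upwards [hΩ.mem_nhds hp] with y hy using pdPPs y hy i
    rw [pd_congr hev]
    have hhas : HasFDerivAt
        (fun q => 2 * pd (ED n i) (LL n X) q - pd (ED n i) (QQ n X) q)
        ((2:ℝ) • fderiv ℝ (pd (ED n i) (LL n X)) (τ, x)
          - fderiv ℝ (pd (ED n i) (QQ n X)) (τ, x)) (τ, x) :=
      ((hasFDerivAt_of_cdOn hΩ (pd_contDiffOn hΩ hLc (ED n i)) hp).const_mul 2).sub
        (hasFDerivAt_of_cdOn hΩ (pd_contDiffOn hΩ hQc (ED n i)) hp)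
    rw [pd_eq hhas (ED n i)]
    simp [pd]
  have hΔPP : ∑ i, pd (ED n i) (pd (ED n i) (PP n d X)) (τ, x)
      = 2 * (∑ i, pd (ED n i) (pd (ED n i) (LL n X)) (τ, x))
        - ∑ i, pd (ED n i) (pd (ED n i) (QQ n X)) (τ, x) := by
    rw [Finset.sum_congr rfl fun i _ => h9 i, Finset.sum_sub_distrib, ← Finset.mul_sum]
  have hinner : ∑ i, pd (ED n i) (PP n d X) (τ, x) * AA n X i (τ, x)
      = 2 * (∑ i, AA n X i (τ, x) * pd (ED n i) (LL n X) (τ, x))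
        - ∑ i, AA n X i (τ, x) * pd (ED n i) (QQ n X) (τ, x) := by
    have e1 : ∀ i, pd (ED n i) (PP n d X) (τ, x) * AA n X i (τ, x)
        = 2 * (AA n X i (τ, x) * pd (ED n i) (LL n X) (τ, x))
          - AA n X i (τ, x) * pd (ED n i) (QQ n X) (τ, x) := by
      intro i
      rw [pdPPs (τ, x) hp i]
      ring
    rw [Finset.sum_congr rfl fun i _ => e1 i, Finset.sum_sub_distrib, ← Finset.mul_sum]
  have hPPval : PP n d X (τ, x) = 2 * LL n X (τ, x) - QQ n X (τ, x) + d * n / τ := rfl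
  -- Cauchy-Schwarz for the Hessian
  have hDIAG : ∑ i, (BB n X i i (τ, x)) ^ 2 ≤ ∑ i, ∑ j, (BB n X i j (τ, x)) ^ 2 :=
    Finset.sum_le_sum fun i _ =>
      Finset.single_le_sum (f := fun j => (BB n X i j (τ, x)) ^ 2)
        (fun j _ => sq_nonneg _) (Finset.mem_univ i)
  have hCS : (LL n X (τ, x)) ^ 2 ≤ (n : ℝ) * ∑ i, (BB n X i i (τ, x)) ^ 2 := by
    have h := sq_sum_le_card_mul_sum_sq (s := (Finset.univ : Finset (Fin n)))
      (f := fun i => BB n X i i (τ, x))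
    simpa [LL] using h
  have hn0 : (0:ℝ) < (n:ℝ) := by exact_mod_cast Nat.pos_of_ne_zero (by omega)
  have hn1 : (1:ℝ) ≤ (n:ℝ) := by exact_mod_cast hn
  have hτi : (0:ℝ) < τ⁻¹ := inv_pos.2 hτ0
  have hnH : (LL n X (τ, x)) ^ 2 ≤ (n : ℝ) * ∑ i, ∑ j, (BB n X i j (τ, x)) ^ 2 :=
    hCS.trans (by nlinarith [hDIAG])
  have key : 0 ≤ 2 * (∑ i, ∑ j, (BB n X i j (τ, x)) ^ 2) - 2 * γ * LL n X (τ, x)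
      - 4 * LL n X (τ, x) * τ⁻¹ + 2 * (n:ℝ) * (τ⁻¹) ^ 2 + 2 * γ * (n:ℝ) * τ⁻¹
      + (n:ℝ) * γ / 2 := by
    nlinarith [hnH, sq_nonneg (LL n X (τ, x) - (n:ℝ) * τ⁻¹ - γ * (n:ℝ) / 2),
      mul_nonneg (mul_nonneg hγ0 (sub_nonneg.2 hγ1)) (sq_nonneg ((n:ℝ))),
      hτi, sq_nonneg τ⁻¹, hγ0, hn0, hn1, mul_pos hn0 hτi]
  -- final assembly
  rw [h8f, h8d, h8e, hΔPP, hPPval, hinner, h7]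
  have hd1 : (2:ℝ) / τ = 2 * τ⁻¹ := by rw [div_eq_mul_inv]
  have hd2 : d * (n:ℝ) / τ = d * n * τ⁻¹ := by rw [div_eq_mul_inv]
  have hd3 : ((n:ℝ)) / τ = n * τ⁻¹ := by rw [div_eq_mul_inv]
  have hd4 : (d + 2) / τ = (d + 2) * τ⁻¹ := by rw [div_eq_mul_inv]
  have hd5 : 2 * QQ n X (τ, x) / τ = 2 * QQ n X (τ, x) * τ⁻¹ := by rw [div_eq_mul_inv]
  have hd6 : ((τ:ℝ) ^ 2)⁻¹ = τ⁻¹ ^ 2 := by rw [← inv_pow]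
  rw [hd1, hd2, hd3, hd4, hd5, hd6]
  nlinarith [key]



end main

end Cor35

open Cor35 in
set_option maxHeartbeats 1000000 in
set_option maxRecDepth 10000 in
/-- Corollary 3.5 (differential inequality for `P`), static flat case. -/
theorem harnack_inequality_P (n : ℕ) (hn : 1 ≤ n) (T d γ : ℝ) (hT : 0 < T)
    (hγ0 : 0 ≤ γ) (hγ1 : γ ≤ 1)
    (f : ℝ → EuclideanSpace ℝ (Fin n) → ℝ) (w : ℝ → ℝ)
    (hf : ContDiffOn ℝ (⊤ : ℕ∞) (Function.uncurry f)
      (Ioo (0 : ℝ) T ×ˢ (univ : Set (EuclideanSpace ℝ (Fin n)))))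
    (hpos : ∀ τ ∈ Ioo (0 : ℝ) T, ∀ x, 0 < f τ x)
    (hw : ContDiffOn ℝ (⊤ : ℕ∞) w (Ioo (0 : ℝ) T))
    (hpde : ∀ τ ∈ Ioo (0 : ℝ) T, ∀ x,
      tderiv n f τ x = slap n f τ x - γ * f τ x * Real.log (f τ x))
    (v : ℝ → EuclideanSpace ℝ (Fin n) → ℝ)
    (hv : v = fun τ x => -Real.log (f τ x) - w τ)
    (P : ℝ → EuclideanSpace ℝ (Fin n) → ℝ)
    (hP : P = fun τ x => 2 * slap n v τ x - ‖sgrad n v τ x‖ ^ 2 + d * n / τ) :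
    ∀ τ ∈ Ioo (0 : ℝ) T, ∀ x,
      tderiv n P τ x
        ≤ slap n P τ x - 2 * ⟪sgrad n P τ x, sgrad n v τ x⟫
          - (2 / τ + 2 * γ) * P τ x
          + (n / τ) * ((d + 2) / τ + 2 * γ * (d + 1))
          + (n / 2) * γ
          - 2 * ‖sgrad n v τ x‖ ^ 2 / τ := by
  intro τ hτ x
  have hΩ : IsOpen (Om n T) := hOm
  have hp : ((τ, x) : ℝ × EuclideanSpace ℝ (Fin n)) ∈ Om n T := ⟨hτ, mem_univ x⟩
  set Fu : ℝ × EuclideanSpace ℝ (Fin n) → ℝ := Function.uncurry f with hFudef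
  have hFc : ContDiffOn ℝ (⊤ : ℕ∞) Fu (Om n T) := hf.of_le (by simp)
  have hfu : ∀ s ∈ Ioo (0:ℝ) T, ∀ y, f s y = Fu (s, y) := fun s _ y => rfl
  have hFpos : ∀ q ∈ Om n T, 0 < Fu q := fun q hq => hpos q.1 hq.1 q.2
  set X : ℝ × EuclideanSpace ℝ (Fin n) → ℝ := Function.uncurry v with hXdef
  have hvu : ∀ s ∈ Ioo (0:ℝ) T, ∀ y, v s y = X (s, y) := fun s _ y => rfl
  have hXeq : X = fun q => -Real.log (Fu q) - w q.1 := by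
    funext q
    show v q.1 q.2 = _
    rw [hv]
    rfl
  have hwinf : ContDiffOn ℝ (⊤ : ℕ∞) w (Ioo (0:ℝ) T) := hw.of_le (by simp)
  have hXc : ContDiffOn ℝ (⊤ : ℕ∞) X (Om n T) := by
    rw [hXeq]
    exact ((hFc.log fun q hq => (hFpos q hq).ne').neg).sub
      (hwinf.comp contDiff_fst.contDiffOn fun q hq => hq.1)
  set c : ℝ → ℝ := fun s => γ * w s + deriv w s with hcdef
  have hcc : ContDiffOn ℝ (⊤ : ℕ∞) c (Ioo (0:ℝ) T) :=
    (contDiffOn_const.mul hwinf).add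
      (hwinf.deriv_of_isOpen isOpen_Ioo (by exact_mod_cast le_top))
  -- the PDE for Fu
  have hpde' : ∀ q ∈ Om n T, pd (TD n) Fu q
      = (∑ i, pd (ED n i) (pd (ED n i) Fu) q) - γ * Fu q * Real.log (Fu q) := by
    intro q hq
    have h1 := hpde q.1 hq.1 q.2
    rw [tderiv_eq hFc hfu hq.1 q.2, slap_eq hFc hfu hq.1 q.2] at h1
    exact h1
  -- derivatives of X in terms of Fu
  have hXhas : ∀ q ∈ Om n T, HasFDerivAt X
      (-((Fu q)⁻¹ • fderiv ℝ Fu q) - deriv w q.1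
        • ContinuousLinearMap.fst ℝ ℝ (EuclideanSpace ℝ (Fin n))) q := by
    intro q hq
    have hwd : HasDerivAt w (deriv w q.1) q.1 :=
      ((hwinf.contDiffAt (isOpen_Ioo.mem_nhds hq.1)).differentiableAt
        (by simp)).hasDerivAt
    have hwfst : HasFDerivAt (fun q' : ℝ × EuclideanSpace ℝ (Fin n) => w q'.1)
        (deriv w q.1 • ContinuousLinearMap.fst ℝ ℝ (EuclideanSpace ℝ (Fin n))) q := by
      simpa [Function.comp_def] using hwd.comp_hasFDerivAt q (hasFDerivAt_fst (𝕜 := ℝ) (p := q))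
    rw [hXeq]
    exact (((hasFDerivAt_of_cdOn hΩ hFc hq).log (hFpos q hq).ne').neg).sub hwfst
  have hAval : ∀ q ∈ Om n T, ∀ i, AA n X i q = -(pd (ED n i) Fu q * (Fu q)⁻¹) := by
    intro q hq i
    rw [show AA n X i q = pd (ED n i) X q from rfl, pd_eq (hXhas q hq) (ED n i)]
    simp only [pd, TD, ED, ContinuousLinearMap.sub_apply, ContinuousLinearMap.add_apply,
      ContinuousLinearMap.neg_apply, ContinuousLinearMap.smul_apply,
      ContinuousLinearMap.coe_fst', smul_eq_mul]
    norm_num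
    ring
  have hTval : ∀ q ∈ Om n T, pd (TD n) X q
      = -(pd (TD n) Fu q * (Fu q)⁻¹) - deriv w q.1 := by
    intro q hq
    rw [pd_eq (hXhas q hq) (TD n)]
    simp only [pd, TD, ED, ContinuousLinearMap.sub_apply, ContinuousLinearMap.add_apply,
      ContinuousLinearMap.neg_apply, ContinuousLinearMap.smul_apply,
      ContinuousLinearMap.coe_fst', smul_eq_mul]
    norm_num
    ring
  have hBval : ∀ q ∈ Om n T, ∀ i, BB n X i i q
      = -(pd (ED n i) (pd (ED n i) Fu) q * (Fu q)⁻¹)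
        + (pd (ED n i) Fu q * (Fu q)⁻¹) ^ 2 := by
    intro q hq i
    have hne : Fu q ≠ 0 := (hFpos q hq).ne'
    have hev : AA n X i =ᶠ[nhds q] fun q' => -(pd (ED n i) Fu q' * (Fu q')⁻¹) := by
      filter_upwards [hΩ.mem_nhds hq] with y hy using hAval y hy i
    have hdG : HasFDerivAt (pd (ED n i) Fu) (fderiv ℝ (pd (ED n i) Fu) q) q :=
      hasFDerivAt_of_cdOn hΩ (pd_contDiffOn hΩ hFc (ED n i)) hq
    have hinv : HasFDerivAt (fun q' => (Fu q')⁻¹)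
        (-((Fu q) ^ 2)⁻¹ • fderiv ℝ Fu q) q := by
      exact ((hasDerivAt_inv hne).comp_hasFDerivAt q (hasFDerivAt_of_cdOn hΩ hFc hq)).congr_fderiv
        (by ext <;> simp)
    have hmul : HasFDerivAt (fun q' => pd (ED n i) Fu q' * (Fu q')⁻¹)
        (pd (ED n i) Fu q • (-((Fu q) ^ 2)⁻¹ • fderiv ℝ Fu q)
          + (Fu q)⁻¹ • fderiv ℝ (pd (ED n i) Fu) q) q := hdG.mul hinv
    rw [show BB n X i i q = pd (ED n i) (AA n X i) q from rfl, pd_congr hev (ED n i),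
      pd_eq hmul.fun_neg (ED n i)]
    have hip : (((Fu q) ^ 2)⁻¹ : ℝ) = ((Fu q)⁻¹) ^ 2 := by rw [← inv_pow]
    simp only [pd, TD, ED, ContinuousLinearMap.sub_apply, ContinuousLinearMap.add_apply,
      ContinuousLinearMap.neg_apply, ContinuousLinearMap.smul_apply,
      ContinuousLinearMap.coe_fst', smul_eq_mul]
    rw [hip]
    ring
  -- the PDE for X
  have veq : ∀ q ∈ Om n T, pd (TD n) X q = LL n X q - QQ n X q - γ * X q - c q.1 := by
    intro q hq
    have hne : Fu q ≠ 0 := (hFpos q hq).ne'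
    have hcancel : Fu q * (Fu q)⁻¹ = 1 := mul_inv_cancel₀ hne
    have hQv : QQ n X q = ∑ i, (pd (ED n i) Fu q * (Fu q)⁻¹) ^ 2 := by
      refine Finset.sum_congr rfl fun i _ => ?_
      rw [hAval q hq i]
      ring
    have hLv : LL n X q = -((∑ i, pd (ED n i) (pd (ED n i) Fu) q) * (Fu q)⁻¹)
        + ∑ i, (pd (ED n i) Fu q * (Fu q)⁻¹) ^ 2 := by
      rw [show LL n X q = ∑ i, BB n X i i q from rfl,
        Finset.sum_congr rfl fun i _ => hBval q hq i, Finset.sum_add_distrib]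
      congr 1
      rw [Finset.sum_mul, ← Finset.sum_neg_distrib]
    have hXval : Real.log (Fu q) = -X q - w q.1 := by
      have h := congrFun hXeq q
      linarith [h]
    rw [hTval q hq, hpde' q hq, hLv, hQv, hXval]
    simp only [hcdef]
    linear_combination (γ * (-X q - w q.1)) * hcancel
  -- apply the core computation
  have hcore := core n hn d γ hγ0 hγ1 X c hXc hcc veq hτ x
  have hPcur : ∀ s ∈ Ioo (0:ℝ) T, ∀ y, P s y = PP n d X (s, y) := by
    intro s hs y
    rw [hP]
    show 2 * slap n v s y - ‖sgrad n v s y‖ ^ 2 + d * n / s = _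
    rw [slap_eq hXc hvu hs y, norm_grad_eq hXc hvu hs y]
    rfl
  have g1 : tderiv n P τ x = pd (TD n) (PP n d X) (τ, x) :=
    tderiv_eq (PP_cd hXc d) hPcur hτ x
  have g2 : slap n P τ x = ∑ i, pd (ED n i) (pd (ED n i) (PP n d X)) (τ, x) :=
    slap_eq (PP_cd hXc d) hPcur hτ x
  have g3 : ⟪sgrad n P τ x, sgrad n v τ x⟫
      = ∑ i, pd (ED n i) (PP n d X) (τ, x) * AA n X i (τ, x) :=
    inner_grads_eq (PP_cd hXc d) hXc hPcur hvu hτ x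
  have g4 : P τ x = PP n d X (τ, x) := hPcur τ hτ x
  have g5 : ‖sgrad n v τ x‖ ^ 2 = QQ n X (τ, x) := norm_grad_eq hXc hvu hτ x
  rw [g1, g2, g3, g4, g5]
  exact hcore
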